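/- arXiv:1610.03406 — 6 statements merged into one kernel-verified Lean document; each statement's English description precedes it below -/
import Mathlib

section
/- Renaming of bound variables: suppose u is not quantified in ψ, v does not occur at all in (Qu/U)ψ, and u ∉ U. Then for all structures M and teams X suitable for both formulas with u, v ∉ dom(X), M,X ⊨ (Qu/U)ψ if and only if M,X ⊨ (Qv/U)Subst(ψ,u,v), where Subst(ψ,u,v) replaces all free occurrences of u in ψ by v. -/
/-- Syntax of IF formulas in negation normal form: literals (atomic relations and
their negations), conjunction, disjunction, and slashed quantifiers. -/
inductive IFForm (Var : Type) : Type where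
  | rel (r : ℕ) (args : List Var)
  | nrel (r : ℕ) (args : List Var)
  | conj (φ ψ : IFForm Var)
  | disj (φ ψ : IFForm Var)
  | ex (v : Var) (V : Set Var) (φ : IFForm Var)
  | all (v : Var) (V : Set Var) (φ : IFForm Var)

namespace IFForm

variable {Var M : Type}

/-- Duplicated team `X[M/v]`. -/
def dup (X : Set (Var → M)) (v : Var) [DecidableEq Var] : Set (Var → M) :=
  {t | ∃ s ∈ X, ∃ a : M, t = Function.update s v a}

/-- Supplement team `X[F/v]`. -/
def supp (X : Set (Var → M)) (F : (Var → M) → M) (v : Var) [DecidableEq Var] :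
    Set (Var → M) :=
  {t | ∃ s ∈ X, t = Function.update s v (F s)}

/-- `F` is `V`-uniform on team `X` with domain `d`. -/
def Uniform (d : Set Var) (X : Set (Var → M)) (V : Set Var)
    (F : (Var → M) → M) : Prop :=
  ∀ s ∈ X, ∀ s' ∈ X, (∀ x ∈ d \ V, s x = s' x) → F s = F s'

/-- Team semantics.  `sat I φ d X` : the team `X` (of domain `d`) satisfies `φ`
in the structure with interpretation `I` of the relation symbols. -/
def sat [DecidableEq Var] (I : ℕ → List M → Prop) :
    IFForm Var → Set Var → Set (Var → M) → Prop
  | .rel r args, _, X => ∀ s ∈ X, I r (args.map s)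
  | .nrel r args, _, X => ∀ s ∈ X, ¬ I r (args.map s)
  | .conj φ ψ, d, X => sat I φ d X ∧ sat I ψ d X
  | .disj φ ψ, d, X => ∃ Y Z, Y ∪ Z = X ∧ sat I φ d Y ∧ sat I ψ d Z
  | .all v _ φ, d, X => sat I φ (insert v d) (dup X v)
  | .ex v V φ, d, X =>
      ∃ F, Uniform d X V F ∧ sat I φ (insert v d) (supp X F v)

/-- Free variables. -/
def FV : IFForm Var → Set Var
  | .rel _ args => {x | x ∈ args}
  | .nrel _ args => {x | x ∈ args}
  | .conj φ ψ => FV φ ∪ FV ψ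
  | .disj φ ψ => FV φ ∪ FV ψ
  | .ex v V φ => (FV φ \ {v}) ∪ V
  | .all v V φ => (FV φ \ {v}) ∪ V

/-- Bound (quantified) variables. -/
def BV : IFForm Var → Set Var
  | .rel _ _ => ∅
  | .nrel _ _ => ∅
  | .conj φ ψ => BV φ ∪ BV ψ
  | .disj φ ψ => BV φ ∪ BV ψ
  | .ex v _ φ => insert v (BV φ)
  | .all v _ φ => insert v (BV φ)

/-- All variables occurring in a formula (free, bound, or in slash sets). -/
def allVars : IFForm Var → Set Var
  | .rel _ args => {x | x ∈ args}
  | .nrel _ args => {x | x ∈ args}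
  | .conj φ ψ => allVars φ ∪ allVars ψ
  | .disj φ ψ => allVars φ ∪ allVars ψ
  | .ex v V φ => insert v (V ∪ allVars φ)
  | .all v V φ => insert v (V ∪ allVars φ)

/-- Quantifier-free formulas. -/
def QFree : IFForm Var → Prop
  | .rel _ _ => True
  | .nrel _ _ => True
  | .conj φ ψ => QFree φ ∧ QFree ψ
  | .disj φ ψ => QFree φ ∧ QFree ψ
  | .ex _ _ _ => False
  | .all _ _ _ => False

/-- A quantifier `Q ∈ {∃, ∀}` coded by a boolean (`true` = `∃`). -/
def quant (q : Bool) (v : Var) (V : Set Var) (φ : IFForm Var) : IFForm Var :=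
  if q then .ex v V φ else .all v V φ

/-- A binary connective `∘ ∈ {∧, ∨}` coded by a boolean (`true` = `∧`). -/
def conn (c : Bool) (φ ψ : IFForm Var) : IFForm Var :=
  if c then .conj φ ψ else .disj φ ψ

/-- `Subst ψ u v`: replace all free occurrences of `u` by `v`
(including inside slash sets). -/
def Subst [DecidableEq Var] (φ : IFForm Var) (u v : Var) : IFForm Var :=
  match φ with
  | .rel r args => .rel r (args.map fun x => if x = u then v else x)
  | .nrel r args => .nrel r (args.map fun x => if x = u then v else x)
  | .conj φ ψ => .conj (Subst φ u v) (Subst ψ u v)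
  | .disj φ ψ => .disj (Subst φ u v) (Subst ψ u v)
  | .ex w W φ =>
      .ex w ((fun x => if x = u then v else x) '' W)
        (if w = u then φ else Subst φ u v)
  | .all w W φ =>
      .all w ((fun x => if x = u then v else x) '' W)
        (if w = u then φ else Subst φ u v)

/-- `χ/{u}`: add `u` to all slash sets of `χ`. -/
def addSlash (φ : IFForm Var) (u : Var) : IFForm Var :=
  match φ with
  | .rel r args => .rel r args
  | .nrel r args => .nrel r args
  | .conj φ ψ => .conj (addSlash φ u) (addSlash ψ u)
  | .disj φ ψ => .disj (addSlash φ u) (addSlash ψ u)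
  | .ex w W φ => .ex w (insert u W) (addSlash φ u)
  | .all w W φ => .all w (insert u W) (addSlash φ u)

end IFForm

namespace IFFormAux

open IFForm

variable {Var M : Type} [DecidableEq Var]

/-- The renaming function `x ↦ if x = u then v else x`. -/
abbrev rn (u v : Var) : Var → Var := fun x => if x = u then v else x

/-- Swap the values of an assignment at `u` and `v`. -/
def swapF (u v : Var) (t : Var → M) : Var → M :=
  fun x => if x = u then t v else if x = v then t u else t x

lemma swapF_apply_u (u v : Var) (t : Var → M) : swapF u v t u = t v := by
  simp [swapF]

lemma swapF_apply_of_ne (u v x : Var) (hxu : x ≠ u) (hxv : x ≠ v) (t : Var → M) :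
    swapF u v t x = t x := by
  simp [swapF, hxu, hxv]

lemma swapF_swapF (u v : Var) (t : Var → M) : swapF u v (swapF u v t) = t := by
  funext x
  simp only [swapF]
  split_ifs with h1 h2 <;> simp_all

lemma swapF_image_image (u v : Var) (S : Set (Var → M)) :
    swapF u v '' (swapF u v '' S) = S := by
  rw [Set.image_image]
  simp [swapF_swapF]

lemma swapF_update (u v w : Var) (hwu : w ≠ u) (hwv : w ≠ v) (t : Var → M) (a : M) :
    swapF u v (Function.update t w a) = Function.update (swapF u v t) w a := by
  funext x
  rcases eq_or_ne x w with rfl | hxw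
  · simp [swapF, hwu, hwv]
  · rw [Function.update_of_ne hxw]
    simp only [swapF]
    split_ifs with h1 h2
    · rw [Function.update_of_ne (Ne.symm hwv)]
    · rw [Function.update_of_ne (Ne.symm hwu)]
    · rw [Function.update_of_ne hxw]

lemma supp_image (g : (Var → M) → (Var → M)) (w : Var)
    (hg : ∀ t a, g (Function.update t w a) = Function.update (g t) w a)
    (Z : Set (Var → M)) (F : (Var → M) → M) :
    supp (g '' Z) F w = g '' supp Z (F ∘ g) w := by
  ext t
  constructor
  · rintro ⟨s, ⟨z, hz, rfl⟩, rfl⟩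
    exact ⟨Function.update z w (F (g z)), ⟨z, hz, rfl⟩, (hg _ _)⟩
  · rintro ⟨s, ⟨z, hz, rfl⟩, rfl⟩
    exact ⟨g z, ⟨z, hz, rfl⟩, (hg _ _)⟩

lemma dup_image (g : (Var → M) → (Var → M)) (w : Var)
    (hg : ∀ t a, g (Function.update t w a) = Function.update (g t) w a)
    (Z : Set (Var → M)) :
    dup (g '' Z) w = g '' dup Z w := by
  ext t
  constructor
  · rintro ⟨s, ⟨z, hz, rfl⟩, a, rfl⟩
    exact ⟨Function.update z w a, ⟨z, hz, a, rfl⟩, (hg _ _)⟩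
  · rintro ⟨s, ⟨z, hz, a, rfl⟩, rfl⟩
    exact ⟨g z, ⟨z, hz, rfl⟩, a, (hg _ _)⟩

lemma Uniform_congr {e : Set Var} {Y : Set (Var → M)} {V : Set Var}
    {F G : (Var → M) → M} (h : ∀ t ∈ Y, F t = G t) :
    Uniform e Y V F ↔ Uniform e Y V G := by
  constructor <;> intro H s hs s' hs' hag
  · rw [← h s hs, ← h s' hs']; exact H s hs s' hs' hag
  · rw [h s hs, h s' hs']; exact H s hs s' hs' hag

lemma supp_congr {Y : Set (Var → M)} {F G : (Var → M) → M} {w : Var}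
    (h : ∀ t ∈ Y, F t = G t) : supp Y F w = supp Y G w := by
  ext t
  constructor <;> rintro ⟨s, hs, rfl⟩
  · exact ⟨s, hs, by rw [h s hs]⟩
  · exact ⟨s, hs, by rw [h s hs]⟩

lemma satA (I : ℕ → List M → Prop) (u : Var) (c : M) (φ : IFForm Var) :
    ∀ (e : Set Var) (Y : Set (Var → M)), u ∉ allVars φ → u ∉ e →
      (sat I φ e ((fun t => Function.update t u c) '' Y) ↔ sat I φ e Y) := by
  induction φ with
  | rel r args =>
      intro e Y hu _
      have hargs : ∀ x ∈ args, x ≠ u := fun x hx h =>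
        hu (by simp only [allVars, Set.mem_setOf_eq]; exact h ▸ hx)
      have hmap : ∀ s : Var → M,
          args.map (Function.update s u c) = args.map s := fun s =>
        List.map_congr_left fun x hx => Function.update_of_ne (hargs x hx) c s
      simp only [sat]
      constructor
      · intro H s hs
        have := H _ ⟨s, hs, rfl⟩
        rwa [hmap] at this
      · rintro H _ ⟨t, ht, rfl⟩
        rw [hmap]; exact H t ht
  | nrel r args =>
      intro e Y hu _
      have hargs : ∀ x ∈ args, x ≠ u := fun x hx h =>
        hu (by simp only [allVars, Set.mem_setOf_eq]; exact h ▸ hx)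
      have hmap : ∀ s : Var → M,
          args.map (Function.update s u c) = args.map s := fun s =>
        List.map_congr_left fun x hx => Function.update_of_ne (hargs x hx) c s
      simp only [sat]
      constructor
      · intro H s hs
        have := H _ ⟨s, hs, rfl⟩
        rwa [hmap] at this
      · rintro H _ ⟨t, ht, rfl⟩
        rw [hmap]; exact H t ht
  | conj φ1 φ2 ih1 ih2 =>
      intro e Y hu he
      have h1 : u ∉ allVars φ1 := fun h => hu (Or.inl h)
      have h2 : u ∉ allVars φ2 := fun h => hu (Or.inr h)
      exact and_congr (ih1 e Y h1 he) (ih2 e Y h2 he)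
  | disj φ1 φ2 ih1 ih2 =>
      intro e Y hu he
      have h1 : u ∉ allVars φ1 := fun h => hu (Or.inl h)
      have h2 : u ∉ allVars φ2 := fun h => hu (Or.inr h)
      simp only [sat]
      constructor
      · rintro ⟨Z1, Z2, hZ, hs1, hs2⟩
        refine ⟨{t ∈ Y | Function.update t u c ∈ Z1},
          {t ∈ Y | Function.update t u c ∈ Z2}, ?_, ?_, ?_⟩
        · ext t
          constructor
          · rintro (h | h) <;> exact h.1
          · intro ht
            have : Function.update t u c ∈ Z1 ∪ Z2 := hZ ▸ ⟨t, ht, rfl⟩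
            rcases this with h | h
            · exact Or.inl ⟨ht, h⟩
            · exact Or.inr ⟨ht, h⟩
        · have e1 : (fun t => Function.update t u c) ''
              {t ∈ Y | Function.update t u c ∈ Z1} = Z1 := by
            apply Set.Subset.antisymm
            · rintro _ ⟨t, ⟨_, htZ⟩, rfl⟩; exact htZ
            · intro z hz
              have : z ∈ Z1 ∪ Z2 := Or.inl hz
              rw [hZ] at this
              obtain ⟨t, ht, rfl⟩ := this
              exact ⟨t, ⟨ht, hz⟩, rfl⟩
          exact (ih1 e _ h1 he).mp (by rw [e1]; exact hs1)
        · have e2 : (fun t => Function.update t u c) ''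
              {t ∈ Y | Function.update t u c ∈ Z2} = Z2 := by
            apply Set.Subset.antisymm
            · rintro _ ⟨t, ⟨_, htZ⟩, rfl⟩; exact htZ
            · intro z hz
              have : z ∈ Z1 ∪ Z2 := Or.inr hz
              rw [hZ] at this
              obtain ⟨t, ht, rfl⟩ := this
              exact ⟨t, ⟨ht, hz⟩, rfl⟩
          exact (ih2 e _ h2 he).mp (by rw [e2]; exact hs2)
      · rintro ⟨Y1, Y2, hY, hs1, hs2⟩
        exact ⟨_, _, by rw [← Set.image_union, hY],
          (ih1 e Y1 h1 he).mpr hs1, (ih2 e Y2 h2 he).mpr hs2⟩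
  | ex w W φ ih =>
      intro e Y hu he
      have hwu : w ≠ u := fun h => hu (by simp [allVars, h])
      have huφ : u ∉ allVars φ := fun h => hu (by simp [allVars, h])
      have he' : u ∉ insert w e := by
        simp only [Set.mem_insert_iff, not_or]; exact ⟨hwu.symm, he⟩
      have hg : ∀ (t : Var → M) a, Function.update (Function.update t w a) u c
          = Function.update (Function.update t u c) w a :=
        fun t a => Function.update_comm hwu a c t
      simp only [sat]
      constructor
      · rintro ⟨F, hF, hsat⟩
        refine ⟨F ∘ (fun t => Function.update t u c), ?_, ?_⟩
        · intro t ht t' ht' hag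
          apply hF _ ⟨t, ht, rfl⟩ _ ⟨t', ht', rfl⟩
          intro x hx
          have hxu : x ≠ u := fun h => he (h ▸ hx.1)
          simp only [Function.update_of_ne hxu]
          exact hag x hx
        · rw [supp_image _ w hg] at hsat
          exact (ih _ _ huφ he').mp hsat
      · rintro ⟨F, hF, hsat⟩
        classical
        set m : (Var → M) → (Var → M) := fun t => Function.update t u c with hm
        have hagree : ∀ t t', m t = m t' → ∀ x ∈ e \ W, t x = t' x := by
          intro t t' h x hx
          have hxu : x ≠ u := fun h' => he (h' ▸ hx.1)
          have := congrFun h x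
          simp only [hm, Function.update_of_ne hxu] at this
          exact this
        set F' : (Var → M) → M :=
          fun s => if h : ∃ t, t ∈ Y ∧ m t = s then F h.choose else F s with hF'
        have key : ∀ t ∈ Y, F' (m t) = F t := by
          intro t ht
          have hex : ∃ t', t' ∈ Y ∧ m t' = m t := ⟨t, ht, rfl⟩
          rw [hF']
          simp only [dif_pos hex]
          obtain ⟨ht0, hm0⟩ := hex.choose_spec
          exact hF _ ht0 _ ht (hagree _ _ hm0)
        refine ⟨F', ?_, ?_⟩
        · rintro _ ⟨t, ht, rfl⟩ _ ⟨t', ht', rfl⟩ hag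
          rw [key t ht, key t' ht']
          apply hF t ht t' ht'
          intro x hx
          have hxu : x ≠ u := fun h => he (h ▸ hx.1)
          have := hag x hx
          simp only [hm, Function.update_of_ne hxu] at this
          exact this
        · have hsupp : supp (m '' Y) F' w = m '' supp Y F w := by
            rw [supp_image _ w hg,
              supp_congr (F := F' ∘ m) (G := F) (fun t ht => key t ht)]
          rw [hsupp]
          exact (ih _ _ huφ he').mpr hsat
  | all w W φ ih =>
      intro e Y hu he
      have hwu : w ≠ u := fun h => hu (by simp [allVars, h])
      have huφ : u ∉ allVars φ := fun h => hu (by simp [allVars, h])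
      have he' : u ∉ insert w e := by
        simp only [Set.mem_insert_iff, not_or]; exact ⟨hwu.symm, he⟩
      have hg : ∀ (t : Var → M) a, Function.update (Function.update t w a) u c
          = Function.update (Function.update t u c) w a :=
        fun t a => Function.update_comm hwu a c t
      simp only [sat]
      rw [dup_image _ w hg]
      exact ih _ _ huφ he'

lemma mem_rn_image {u v : Var} {W : Set Var} {x : Var} (hxd : x ≠ u) (hxv : x ≠ v) :
    x ∈ rn u v '' W ↔ x ∈ W := by
  constructor
  · rintro ⟨y, hy, rfl⟩
    by_cases hyu : y = u
    · exact absurd (by simp [rn, hyu]) hxv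
    · simpa [rn, hyu] using hy
  · intro hx
    exact ⟨x, hx, by simp [rn, hxd]⟩

lemma v_mem_rn_image {u v : Var} {W : Set Var} (hvW : v ∉ W) :
    v ∈ rn u v '' W ↔ u ∈ W := by
  constructor
  · rintro ⟨y, hy, hyv⟩
    by_cases hyu : y = u
    · exact hyu ▸ hy
    · simp [rn, hyu] at hyv
      exact absurd (hyv ▸ hy) hvW
  · intro hu
    exact ⟨u, hu, by simp [rn]⟩

lemma agree_iff {u v : Var} (huv : u ≠ v) {d W : Set Var}
    (hud : u ∉ d) (hvd : v ∉ d) (hvW : v ∉ W) (t t' : Var → M) :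
    (∀ x ∈ insert u d \ W, swapF u v t x = swapF u v t' x) ↔
      (∀ x ∈ insert v d \ rn u v '' W, t x = t' x) := by
  constructor
  · intro H x hx
    obtain ⟨hx1, hx2⟩ := hx
    rcases Set.mem_insert_iff.mp hx1 with heq | hxd
    · subst heq
      have huW : u ∉ W := fun h => hx2 ((v_mem_rn_image hvW).mpr h)
      have := H u ⟨Set.mem_insert _ _, huW⟩
      rwa [swapF_apply_u, swapF_apply_u] at this
    · have hxu : x ≠ u := fun h => hud (h ▸ hxd)
      have hxv : x ≠ v := fun h => hvd (h ▸ hxd)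
      have hxW : x ∉ W := fun h => hx2 ((mem_rn_image hxu hxv).mpr h)
      have := H x ⟨Set.mem_insert_of_mem _ hxd, hxW⟩
      rwa [swapF_apply_of_ne _ _ _ hxu hxv, swapF_apply_of_ne _ _ _ hxu hxv] at this
  · intro H x hx
    obtain ⟨hx1, hx2⟩ := hx
    rcases Set.mem_insert_iff.mp hx1 with heq | hxd
    · have hvrn : v ∉ rn u v '' W :=
        fun h => hx2 (by rw [heq]; exact (v_mem_rn_image hvW).mp h)
      have := H v ⟨Set.mem_insert _ _, hvrn⟩
      rw [heq]
      rwa [swapF_apply_u, swapF_apply_u]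
    · have hxu : x ≠ u := fun h => hud (h ▸ hxd)
      have hxv : x ≠ v := fun h => hvd (h ▸ hxd)
      have hxrn : x ∉ rn u v '' W := fun h => hx2 ((mem_rn_image hxu hxv).mp h)
      have := H x ⟨Set.mem_insert_of_mem _ hxd, hxrn⟩
      rwa [swapF_apply_of_ne _ _ _ hxu hxv, swapF_apply_of_ne _ _ _ hxu hxv]

lemma uniform_swap {u v : Var} (huv : u ≠ v) {d W : Set Var}
    (hud : u ∉ d) (hvd : v ∉ d) (hvW : v ∉ W)
    (Z : Set (Var → M)) (F : (Var → M) → M) :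
    Uniform (insert u d) (swapF u v '' Z) W F ↔
      Uniform (insert v d) Z (rn u v '' W) (F ∘ swapF u v) := by
  constructor
  · intro hF t ht t' ht' hag
    exact hF _ ⟨t, ht, rfl⟩ _ ⟨t', ht', rfl⟩
      ((agree_iff huv hud hvd hvW t t').mpr hag)
  · rintro hG _ ⟨t, ht, rfl⟩ _ ⟨t', ht', rfl⟩ hag
    exact hG t ht t' ht' ((agree_iff huv hud hvd hvW t t').mp hag)

lemma satB (I : ℕ → List M → Prop) (u v : Var) (huv : u ≠ v) (ψ : IFForm Var) :
    ∀ (d : Set Var) (Z : Set (Var → M)),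
      u ∉ BV ψ → v ∉ allVars ψ → u ∉ d → v ∉ d →
      (sat I ψ (insert u d) (swapF u v '' Z) ↔
        sat I (Subst ψ u v) (insert v d) Z) := by
  induction ψ with
  | rel r args =>
      intro d Z _ hv _ _
      have hargs : ∀ x ∈ args, x ≠ v := fun x hx h =>
        hv (by simp only [allVars, Set.mem_setOf_eq]; exact h ▸ hx)
      have hmap : ∀ t : Var → M,
          args.map (swapF u v t) = (args.map (rn u v)).map t := by
        intro t
        rw [List.map_map]
        refine List.map_congr_left fun x hx => ?_
        by_cases hxu : x = u
        · subst hxu; simp [swapF, rn, Function.comp]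
        · simp [swapF, rn, hxu, hargs x hx, Function.comp]
      simp only [sat, Subst]
      constructor
      · intro H t ht
        have := H _ ⟨t, ht, rfl⟩
        rwa [hmap] at this
      · rintro H _ ⟨t, ht, rfl⟩
        rw [hmap]; exact H t ht
  | nrel r args =>
      intro d Z _ hv _ _
      have hargs : ∀ x ∈ args, x ≠ v := fun x hx h =>
        hv (by simp only [allVars, Set.mem_setOf_eq]; exact h ▸ hx)
      have hmap : ∀ t : Var → M,
          args.map (swapF u v t) = (args.map (rn u v)).map t := by
        intro t
        rw [List.map_map]
        refine List.map_congr_left fun x hx => ?_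
        by_cases hxu : x = u
        · subst hxu; simp [swapF, rn, Function.comp]
        · simp [swapF, rn, hxu, hargs x hx, Function.comp]
      simp only [sat, Subst]
      constructor
      · intro H t ht
        have := H _ ⟨t, ht, rfl⟩
        rwa [hmap] at this
      · rintro H _ ⟨t, ht, rfl⟩
        rw [hmap]; exact H t ht
  | conj φ1 φ2 ih1 ih2 =>
      intro d Z hbu hav hud hvd
      have hb1 : u ∉ BV φ1 := fun h => hbu (Or.inl h)
      have hb2 : u ∉ BV φ2 := fun h => hbu (Or.inr h)
      have ha1 : v ∉ allVars φ1 := fun h => hav (Or.inl h)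
      have ha2 : v ∉ allVars φ2 := fun h => hav (Or.inr h)
      exact and_congr (ih1 d Z hb1 ha1 hud hvd) (ih2 d Z hb2 ha2 hud hvd)
  | disj φ1 φ2 ih1 ih2 =>
      intro d Z hbu hav hud hvd
      have hb1 : u ∉ BV φ1 := fun h => hbu (Or.inl h)
      have hb2 : u ∉ BV φ2 := fun h => hbu (Or.inr h)
      have ha1 : v ∉ allVars φ1 := fun h => hav (Or.inl h)
      have ha2 : v ∉ allVars φ2 := fun h => hav (Or.inr h)
      simp only [sat, Subst]
      constructor
      · rintro ⟨Y1, Y2, hY, hs1, hs2⟩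
        refine ⟨swapF u v '' Y1, swapF u v '' Y2, ?_, ?_, ?_⟩
        · rw [← Set.image_union, hY, swapF_image_image]
        · exact (ih1 d _ hb1 ha1 hud hvd).mp
            (by rw [swapF_image_image]; exact hs1)
        · exact (ih2 d _ hb2 ha2 hud hvd).mp
            (by rw [swapF_image_image]; exact hs2)
      · rintro ⟨Z1, Z2, hZ, hs1, hs2⟩
        exact ⟨swapF u v '' Z1, swapF u v '' Z2,
          by rw [← Set.image_union, hZ],
          (ih1 d Z1 hb1 ha1 hud hvd).mpr hs1,
          (ih2 d Z2 hb2 ha2 hud hvd).mpr hs2⟩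
  | ex w W φ ih =>
      intro d Z hbu hav hud hvd
      have hwu : w ≠ u := fun h => hbu (by simp [BV, h])
      have hbφ : u ∉ BV φ := fun h => hbu (by simp [BV, h])
      have hwv : w ≠ v := fun h => hav (by simp [allVars, h])
      have hvW : v ∉ W := fun h => hav (by simp [allVars, h])
      have haφ : v ∉ allVars φ := fun h => hav (by simp [allVars, h])
      have hud' : u ∉ insert w d := by
        simp only [Set.mem_insert_iff, not_or]; exact ⟨hwu.symm, hud⟩
      have hvd' : v ∉ insert w d := by
        simp only [Set.mem_insert_iff, not_or]; exact ⟨hwv.symm, hvd⟩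
      have hg : ∀ (t : Var → M) a,
          swapF u v (Function.update t w a) = Function.update (swapF u v t) w a :=
        swapF_update u v w hwu hwv
      have hins : insert w (insert u d) = insert u (insert w d) :=
        Set.insert_comm w u d
      have hins' : insert w (insert v d) = insert v (insert w d) :=
        Set.insert_comm w v d
      simp only [Subst, if_neg hwu, sat]
      constructor
      · rintro ⟨F, hF, hsat⟩
        refine ⟨F ∘ swapF u v, ?_, ?_⟩
        · exact (uniform_swap huv hud hvd hvW Z F).mp hF
        · rw [supp_image _ w hg] at hsat
          rw [hins] at hsat
          rw [hins']
          exact (ih (insert w d) _ hbφ haφ hud' hvd').mp hsat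
      · rintro ⟨G, hG, hsat⟩
        refine ⟨G ∘ swapF u v, ?_, ?_⟩
        · have hGG : (G ∘ swapF u v) ∘ swapF u v = G := by
            funext t; simp [Function.comp, swapF_swapF]
          rw [uniform_swap huv hud hvd hvW Z (G ∘ swapF u v), hGG]
          exact hG
        · rw [supp_image _ w hg, hins]
          have hGG : (G ∘ swapF u v) ∘ swapF u v = G := by
            funext t; simp [Function.comp, swapF_swapF]
          rw [hGG]
          rw [hins'] at hsat
          exact (ih (insert w d) _ hbφ haφ hud' hvd').mpr hsat
  | all w W φ ih =>
      intro d Z hbu hav hud hvd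
      have hwu : w ≠ u := fun h => hbu (by simp [BV, h])
      have hbφ : u ∉ BV φ := fun h => hbu (by simp [BV, h])
      have hwv : w ≠ v := fun h => hav (by simp [allVars, h])
      have haφ : v ∉ allVars φ := fun h => hav (by simp [allVars, h])
      have hud' : u ∉ insert w d := by
        simp only [Set.mem_insert_iff, not_or]; exact ⟨hwu.symm, hud⟩
      have hvd' : v ∉ insert w d := by
        simp only [Set.mem_insert_iff, not_or]; exact ⟨hwv.symm, hvd⟩
      have hg : ∀ (t : Var → M) a,
          swapF u v (Function.update t w a) = Function.update (swapF u v t) w a :=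
        swapF_update u v w hwu hwv
      simp only [Subst, if_neg hwu, sat]
      rw [dup_image _ w hg, Set.insert_comm w u d, Set.insert_comm w v d]
      exact ih (insert w d) _ hbφ haφ hud' hvd'

lemma mkey {u v : Var} (huv : u ≠ v) (c : M) (s : Var → M) (a : M) :
    Function.update (swapF u v (Function.update s u a)) u c =
      Function.update (Function.update s v a) u c := by
  funext x
  rcases eq_or_ne x u with rfl | hxu
  · simp
  · rw [Function.update_of_ne hxu, Function.update_of_ne hxu]
    rcases eq_or_ne x v with rfl | hxv
    · rw [Function.update_self]
      simp [swapF, Ne.symm huv]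
    · rw [Function.update_of_ne hxv, swapF_apply_of_ne _ _ _ hxu hxv,
        Function.update_of_ne hxu]

lemma supp_empty (F : (Var → M) → M) (w : Var) :
    supp (∅ : Set (Var → M)) F w = ∅ := by
  ext t; simp [supp]

lemma dup_empty (w : Var) : dup (∅ : Set (Var → M)) w = ∅ := by
  ext t; simp [dup]

lemma sat_empty (I : ℕ → List M → Prop) (u₀ : Var) (φ : IFForm Var) :
    ∀ e : Set Var, sat I φ e (∅ : Set (Var → M)) := by
  induction φ with
  | rel r args => intro e; intro s hs; exact absurd hs (Set.notMem_empty s)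
  | nrel r args => intro e; intro s hs; exact absurd hs (Set.notMem_empty s)
  | conj φ1 φ2 ih1 ih2 => exact fun e => ⟨ih1 e, ih2 e⟩
  | disj φ1 φ2 ih1 ih2 =>
      exact fun e => ⟨∅, ∅, by simp, ih1 e, ih2 e⟩
  | ex w W φ ih =>
      intro e
      refine ⟨fun t => t u₀, fun s hs => absurd hs (Set.notMem_empty s), ?_⟩
      rw [supp_empty]
      exact ih _
  | all w W φ ih =>
      intro e
      show sat I φ _ (dup (∅ : Set (Var → M)) w)
      rw [dup_empty]
      exact ih _

lemma notMem_allVars_subst (u v : Var) (huv : u ≠ v) (ψ : IFForm Var)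
    (hb : u ∉ BV ψ) : u ∉ allVars (Subst ψ u v) := by
  have hrn : ∀ x, rn u v x ≠ u := by
    intro x h
    by_cases hxu : x = u
    · rw [hxu] at h; simp [rn] at h; exact huv h.symm
    · simp [rn, hxu] at h
  induction ψ with
  | rel r args =>
      intro h
      simp only [Subst, allVars, Set.mem_setOf_eq, List.mem_map] at h
      obtain ⟨x, _, hx⟩ := h
      exact hrn x hx
  | nrel r args =>
      intro h
      simp only [Subst, allVars, Set.mem_setOf_eq, List.mem_map] at h
      obtain ⟨x, _, hx⟩ := h
      exact hrn x hx
  | conj φ1 φ2 ih1 ih2 =>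
      have h1 : u ∉ BV φ1 := fun h => hb (Or.inl h)
      have h2 : u ∉ BV φ2 := fun h => hb (Or.inr h)
      rintro (h | h)
      · exact ih1 h1 h
      · exact ih2 h2 h
  | disj φ1 φ2 ih1 ih2 =>
      have h1 : u ∉ BV φ1 := fun h => hb (Or.inl h)
      have h2 : u ∉ BV φ2 := fun h => hb (Or.inr h)
      rintro (h | h)
      · exact ih1 h1 h
      · exact ih2 h2 h
  | ex w W φ ih =>
      have hwu : w ≠ u := fun h => hb (by simp [BV, h])
      have hbφ : u ∉ BV φ := fun h => hb (by simp [BV, h])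
      intro h
      simp only [Subst, if_neg hwu, allVars, Set.mem_insert_iff,
        Set.mem_union] at h
      rcases h with h | h | h
      · exact hwu h.symm
      · obtain ⟨x, _, hx⟩ := h
        exact hrn x hx
      · exact ih hbφ h
  | all w W φ ih =>
      have hwu : w ≠ u := fun h => hb (by simp [BV, h])
      have hbφ : u ∉ BV φ := fun h => hb (by simp [BV, h])
      intro h
      simp only [Subst, if_neg hwu, allVars, Set.mem_insert_iff,
        Set.mem_union] at h
      rcases h with h | h | h
      · exact hwu h.symm
      · obtain ⟨x, _, hx⟩ := h
        exact hrn x hx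
      · exact ih hbφ h

end IFFormAux

open IFForm in
/-- Renaming of bound variables: if `u` is not quantified in `ψ`, `v` does not
occur at all in `(Qu/U)ψ`, and `u ∉ U`, then `(Qu/U)ψ` and
`(Qv/U)Subst(ψ,u,v)` are satisfied by the same suitable teams `X` with
`u, v ∉ dom(X)`. -/
theorem stmt_8 {Var M : Type} [DecidableEq Var] (I : ℕ → List M → Prop)
    (q : Bool) (u v : Var) (U : Set Var) (ψ : IFForm Var)
    (d : Set Var) (X : Set (Var → M))
    (hbv : u ∉ BV ψ)
    (hocc : v ∉ allVars (quant q u U ψ))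
    (huU : u ∉ U)
    (hsuit : FV (quant q u U ψ) ⊆ d)
    (hsuit' : FV (quant q v U (Subst ψ u v)) ⊆ d)
    (hu : u ∉ d) (hv : v ∉ d) :
    sat I (quant q u U ψ) d X ↔ sat I (quant q v U (Subst ψ u v)) d X := by
  classical
  have hocc' : v ∉ insert u (U ∪ allVars ψ) := by
    cases q <;> simpa [quant, allVars] using hocc
  have hvu : v ≠ u := fun h => hocc' (Or.inl h)
  have hvψ : v ∉ allVars ψ := fun h => hocc' (Or.inr (Or.inr h))
  have huv : u ≠ v := hvu.symm
  rcases isEmpty_or_nonempty M with hM | hM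
  · have hVM : IsEmpty (Var → M) := ⟨fun f => hM.false (f u)⟩
    have hX : X = ∅ := Set.eq_empty_of_isEmpty X
    subst hX
    have hq : ∀ (w : Var) (W : Set Var) (φ : IFForm Var),
        sat I (quant q w W φ) d (∅ : Set (Var → M)) := by
      intro w W φ
      cases q
      · show sat I (.all w W φ) d ∅
        show sat I φ _ (dup (∅ : Set (Var → M)) w)
        rw [IFFormAux.dup_empty]
        exact IFFormAux.sat_empty I u φ _
      · exact ⟨fun t => t u, fun s hs => absurd hs (Set.notMem_empty s), by
          rw [IFFormAux.supp_empty]; exact IFFormAux.sat_empty I u φ _⟩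
    exact iff_of_true (hq u U ψ) (hq v U _)
  · obtain ⟨c⟩ := hM
    have husub : u ∉ allVars (Subst ψ u v) :=
      IFFormAux.notMem_allVars_subst u v huv ψ hbv
    have huvd : u ∉ insert v d := by
      simp only [Set.mem_insert_iff, not_or]; exact ⟨huv, hu⟩
    cases q
    · -- universal quantifier
      show sat I (.all u U ψ) d X ↔ sat I (.all v U (Subst ψ u v)) d X
      show sat I ψ (insert u d) (dup X u) ↔
        sat I (Subst ψ u v) (insert v d) (dup X v)
      have hB := IFFormAux.satB I u v huv ψ d
        (IFFormAux.swapF u v '' dup X u) hbv hvψ hu hv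
      rw [IFFormAux.swapF_image_image] at hB
      rw [hB, ← IFFormAux.satA I u c (Subst ψ u v) (insert v d) _ husub huvd,
        ← IFFormAux.satA I u c (Subst ψ u v) (insert v d) (dup X v) husub huvd]
      have himg : (fun t => Function.update t u c) ''
          (IFFormAux.swapF u v '' dup X u) =
          (fun t => Function.update t u c) '' dup X v := by
        ext t
        constructor
        · rintro ⟨_, ⟨_, ⟨s, hs, a, rfl⟩, rfl⟩, rfl⟩
          exact ⟨Function.update s v a, ⟨s, hs, a, rfl⟩,
            (IFFormAux.mkey huv c s a).symm⟩
        · rintro ⟨_, ⟨s, hs, a, rfl⟩, rfl⟩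
          exact ⟨IFFormAux.swapF u v (Function.update s u a),
            ⟨Function.update s u a, ⟨s, hs, a, rfl⟩, rfl⟩,
            IFFormAux.mkey huv c s a⟩
      rw [himg]
    · -- existential quantifier
      show sat I (.ex u U ψ) d X ↔ sat I (.ex v U (Subst ψ u v)) d X
      have inner : ∀ F : (Var → M) → M,
          sat I ψ (insert u d) (supp X F u) ↔
            sat I (Subst ψ u v) (insert v d) (supp X F v) := by
        intro F
        have hB := IFFormAux.satB I u v huv ψ d
          (IFFormAux.swapF u v '' supp X F u) hbv hvψ hu hv
        rw [IFFormAux.swapF_image_image] at hB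
        rw [hB, ← IFFormAux.satA I u c (Subst ψ u v) (insert v d) _ husub huvd,
          ← IFFormAux.satA I u c (Subst ψ u v) (insert v d) (supp X F v) husub huvd]
        have himg : (fun t => Function.update t u c) ''
            (IFFormAux.swapF u v '' supp X F u) =
            (fun t => Function.update t u c) '' supp X F v := by
          ext t
          constructor
          · rintro ⟨_, ⟨_, ⟨s, hs, rfl⟩, rfl⟩, rfl⟩
            exact ⟨Function.update s v (F s), ⟨s, hs, rfl⟩,
              (IFFormAux.mkey huv c s (F s)).symm⟩
          · rintro ⟨_, ⟨s, hs, rfl⟩, rfl⟩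
            exact ⟨IFFormAux.swapF u v (Function.update s u (F s)),
              ⟨Function.update s u (F s), ⟨s, hs, rfl⟩, rfl⟩,
              IFFormAux.mkey huv c s (F s)⟩
        rw [himg]
      exact ⟨fun ⟨F, h1, h2⟩ => ⟨F, h1, (inner F).mp h2⟩,
        fun ⟨F, h1, h2⟩ => ⟨F, h1, (inner F).mpr h2⟩⟩
end

section
/- Extraction of quantifiers: let ψ, χ be IF formulas, ∘ ∈ {∧, ∨}, and suppose u occurs neither in χ nor in U. Then (Qu/U)ψ ∘ χ and (Qu/U)(ψ ∘ χ/{u}) are satisfied by exactly the same teams X with u ∉ dom(X) on every structure M, where χ/{u} is obtained from χ by adding u to all slash sets of χ. -/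
namespace IFForm

variable {Var M : Type} [DecidableEq Var] {I : ℕ → List M → Prop}

/-- Two assignments agree away from `u`. -/
def Agree (u : Var) (s t : Var → M) : Prop := ∀ x, x ≠ u → s x = t x

lemma Agree.symm' {u : Var} {s t : Var → M} (h : Agree u s t) : Agree u t s :=
  fun x hx => (h x hx).symm

lemma agree_update {u v : Var} {s t : Var → M} (h : Agree u s t) (a : M) :
    Agree u (Function.update s v a) (Function.update t v a) := by
  intro x hx
  by_cases hv : x = v
  · subst hv; simp
  · rw [Function.update_of_ne hv, Function.update_of_ne hv]
    exact h x hx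

lemma agree_self_update {u : Var} (s : Var → M) (a : M) :
    Agree u s (Function.update s u a) :=
  fun x hx => (Function.update_of_ne hx _ _).symm

/-- Teams in bijection-like correspondence up to the variable `u`. -/
def TRel (u : Var) (X Y : Set (Var → M)) : Prop :=
  (∀ s ∈ X, ∃ t ∈ Y, Agree u s t) ∧ (∀ t ∈ Y, ∃ s ∈ X, Agree u s t)

lemma TRel.symm {u : Var} {X Y : Set (Var → M)} (h : TRel u X Y) : TRel u Y X :=
  ⟨fun t ht => (h.2 t ht).imp fun s hs => ⟨hs.1, hs.2.symm'⟩,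
   fun s hs => (h.1 s hs).imp fun t ht => ⟨ht.1, ht.2.symm'⟩⟩

lemma trel_dup (u : Var) (X : Set (Var → M)) : TRel u X (dup X u) := by
  constructor
  · intro s hs
    exact ⟨Function.update s u (s u), ⟨s, hs, s u, rfl⟩, agree_self_update s (s u)⟩
  · rintro t ⟨s, hs, a, rfl⟩
    exact ⟨s, hs, agree_self_update s a⟩

lemma trel_supp (u : Var) (X : Set (Var → M)) (F : (Var → M) → M) :
    TRel u X (supp X F u) := by
  constructor
  · intro s hs
    exact ⟨Function.update s u (F s), ⟨s, hs, rfl⟩, agree_self_update s (F s)⟩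
  · rintro t ⟨s, hs, rfl⟩
    exact ⟨s, hs, agree_self_update s (F s)⟩

lemma TRel.dup' {u : Var} {X Y : Set (Var → M)} (h : TRel u X Y) (v : Var) :
    TRel u (dup X v) (dup Y v) := by
  constructor
  · rintro _ ⟨s, hs, a, rfl⟩
    obtain ⟨t, ht, ha⟩ := h.1 s hs
    exact ⟨Function.update t v a, ⟨t, ht, a, rfl⟩, agree_update ha a⟩
  · rintro _ ⟨t, ht, a, rfl⟩
    obtain ⟨s, hs, ha⟩ := h.2 t ht
    exact ⟨Function.update s v a, ⟨s, hs, a, rfl⟩, agree_update ha a⟩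

lemma uniform_mono {d V : Set Var} {X Y : Set (Var → M)} {F : (Var → M) → M}
    (h : Y ⊆ X) (hF : Uniform d X V F) : Uniform d Y V F :=
  fun s hs s' hs' hag => hF s (h hs) s' (h hs') hag

lemma uniform_congr {d d' V V' : Set Var} {X : Set (Var → M)} {F : (Var → M) → M}
    (h : d \ V = d' \ V') : Uniform d X V F ↔ Uniform d' X V' F := by
  unfold Uniform; rw [h]

lemma insert_diff_insert' {u : Var} {d V : Set Var} (hd : u ∉ d) :
    insert u d \ insert u V = d \ V := by
  ext x
  by_cases hx : x = u <;>
    simp [Set.mem_diff, Set.mem_insert_iff, hx, hd]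

lemma supp_union {Y Z : Set (Var → M)} {F : (Var → M) → M} {v : Var} :
    supp (Y ∪ Z) F v = supp Y F v ∪ supp Z F v := by
  ext t
  constructor
  · rintro ⟨s, hs | hs, rfl⟩
    · exact Or.inl ⟨s, hs, rfl⟩
    · exact Or.inr ⟨s, hs, rfl⟩
  · rintro (⟨s, hs, rfl⟩ | ⟨s, hs, rfl⟩)
    · exact ⟨s, Or.inl hs, rfl⟩
    · exact ⟨s, Or.inr hs, rfl⟩

lemma dup_union {Y Z : Set (Var → M)} {v : Var} :
    dup (Y ∪ Z) v = dup Y v ∪ dup Z v := by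
  ext t
  constructor
  · rintro ⟨s, hs | hs, a, rfl⟩
    · exact Or.inl ⟨s, hs, a, rfl⟩
    · exact Or.inr ⟨s, hs, a, rfl⟩
  · rintro (⟨s, hs, a, rfl⟩ | ⟨s, hs, a, rfl⟩)
    · exact ⟨s, Or.inl hs, a, rfl⟩
    · exact ⟨s, Or.inr hs, a, rfl⟩

lemma supp_congr' {X : Set (Var → M)} {F G : (Var → M) → M} {v : Var}
    (h : ∀ s ∈ X, F s = G s) : supp X F v = supp X G v := by
  ext t
  constructor
  · rintro ⟨s, hs, rfl⟩; exact ⟨s, hs, by rw [h s hs]⟩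
  · rintro ⟨s, hs, rfl⟩; exact ⟨s, hs, by rw [h s hs]⟩

lemma supp_mono {X Y : Set (Var → M)} {F : (Var → M) → M} {v : Var}
    (h : Y ⊆ X) : supp Y F v ⊆ supp X F v := by
  rintro _ ⟨s, hs, rfl⟩; exact ⟨s, h hs, rfl⟩

lemma dup_mono {X Y : Set (Var → M)} {v : Var}
    (h : Y ⊆ X) : dup Y v ⊆ dup X v := by
  rintro _ ⟨s, hs, a, rfl⟩; exact ⟨s, h hs, a, rfl⟩

lemma sat_mono {φ : IFForm Var} : ∀ {d : Set Var} {X Y : Set (Var → M)},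
    Y ⊆ X → sat I φ d X → sat I φ d Y := by
  induction φ with
  | rel r args => exact fun h hs s hsY => hs s (h hsY)
  | nrel r args => exact fun h hs s hsY => hs s (h hsY)
  | conj φ ψ ih1 ih2 => exact fun h hs => ⟨ih1 h hs.1, ih2 h hs.2⟩
  | disj φ ψ ih1 ih2 =>
    rintro d X Y h ⟨A, B, rfl, h1, h2⟩
    exact ⟨A ∩ Y, B ∩ Y, by rw [← Set.union_inter_distrib_right,
      Set.inter_eq_right.mpr h], ih1 Set.inter_subset_left h1,
      ih2 Set.inter_subset_left h2⟩
  | all v V φ ih => exact fun h hs => ih (dup_mono h) hs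
  | ex v V φ ih =>
    rintro d X Y h ⟨F, hF, hs⟩
    exact ⟨F, uniform_mono h hF, ih (supp_mono h) hs⟩

lemma sat_empty {φ : IFForm Var} : ∀ {d : Set Var},
    sat I φ d (∅ : Set (Var → M)) := by
  induction φ with
  | rel r args => exact fun s hs => hs.elim
  | nrel r args => exact fun s hs => hs.elim
  | conj φ ψ ih1 ih2 => exact ⟨ih1, ih2⟩
  | disj φ ψ ih1 ih2 => exact ⟨∅, ∅, by simp, ih1, ih2⟩
  | all v V φ ih =>
    intro d
    have : dup (∅ : Set (Var → M)) v = ∅ := by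
      ext t; constructor
      · rintro ⟨s, hs, _⟩; exact hs.elim
      · rintro hs; exact hs.elim
    show sat I φ _ (dup ∅ v)
    rw [this]; exact ih
  | ex v V φ ih =>
    intro d
    refine ⟨fun s => s v, fun s hs => hs.elim, ?_⟩
    have : supp (∅ : Set (Var → M)) (fun s => s v) v = ∅ := by
      ext t; constructor
      · rintro ⟨s, hs, _⟩; exact hs.elim
      · rintro hs; exact hs.elim
    rw [this]; exact ih

lemma rel_sat {u : Var} {χ : IFForm Var} : ∀ {d : Set Var} {X Y : Set (Var → M)},
    u ∉ allVars χ → u ∉ d → TRel u X Y → sat I χ d X → sat I χ d Y := by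
  induction χ with
  | rel r args =>
    intro d X Y hu hd hR hs s hsY
    simp only [allVars, Set.mem_setOf_eq] at hu
    obtain ⟨t, ht, ha⟩ := hR.2 s hsY
    have : args.map s = args.map t :=
      List.map_congr_left fun x hx => (ha x fun h => hu (h ▸ hx)).symm
    rw [this]; exact hs t ht
  | nrel r args =>
    intro d X Y hu hd hR hs s hsY
    simp only [allVars, Set.mem_setOf_eq] at hu
    obtain ⟨t, ht, ha⟩ := hR.2 s hsY
    have : args.map s = args.map t :=
      List.map_congr_left fun x hx => (ha x fun h => hu (h ▸ hx)).symm
    rw [this]; exact hs t ht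
  | conj φ ψ ih1 ih2 =>
    intro d X Y hu hd hR hs
    simp only [allVars, Set.mem_union, not_or] at hu
    exact ⟨ih1 hu.1 hd hR hs.1, ih2 hu.2 hd hR hs.2⟩
  | disj φ ψ ih1 ih2 =>
    rintro d X Y hu hd hR ⟨A, B, rfl, h1, h2⟩
    simp only [allVars, Set.mem_union, not_or] at hu
    refine ⟨{t ∈ Y | ∃ s ∈ A, Agree u s t}, {t ∈ Y | ∃ s ∈ B, Agree u s t},
      ?_, ih1 hu.1 hd ⟨?_, ?_⟩ h1, ih2 hu.2 hd ⟨?_, ?_⟩ h2⟩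
    · ext t
      simp only [Set.mem_union, Set.mem_setOf_eq]
      constructor
      · rintro (⟨ht, _⟩ | ⟨ht, _⟩) <;> exact ht
      · intro ht
        obtain ⟨s, hs, ha⟩ := hR.2 t ht
        rcases hs with hs | hs
        · exact Or.inl ⟨ht, s, hs, ha⟩
        · exact Or.inr ⟨ht, s, hs, ha⟩
    · intro s hs
      obtain ⟨t, ht, ha⟩ := hR.1 s (Or.inl hs)
      exact ⟨t, ⟨ht, s, hs, ha.symm'.symm'⟩, ha⟩
    · rintro t ⟨ht, s, hs, ha⟩
      exact ⟨s, hs, ha⟩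
    · intro s hs
      obtain ⟨t, ht, ha⟩ := hR.1 s (Or.inr hs)
      exact ⟨t, ⟨ht, s, hs, ha.symm'.symm'⟩, ha⟩
    · rintro t ⟨ht, s, hs, ha⟩
      exact ⟨s, hs, ha⟩
  | all v V φ ih =>
    intro d X Y hu hd hR hs
    simp only [allVars, Set.mem_insert_iff, Set.mem_union, not_or] at hu
    exact ih hu.2.2 (by simp only [Set.mem_insert_iff, not_or]; exact ⟨hu.1, hd⟩)
      (hR.dup' v) hs
  | ex v V φ ih =>
    rintro d X Y hu hd hR ⟨F, hF, hsat⟩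
    simp only [allVars, Set.mem_insert_iff, Set.mem_union, not_or] at hu
    classical
    set σ : (Var → M) → (Var → M) := fun t =>
      if h : ∃ s ∈ X, Agree u s t then h.choose else t with hσdef
    have hσ : ∀ t ∈ Y, σ t ∈ X ∧ Agree u (σ t) t := by
      intro t ht
      have h : ∃ s ∈ X, Agree u s t := hR.2 t ht
      simp only [hσdef, dif_pos h]
      exact h.choose_spec
    refine ⟨fun t => F (σ t), ?_, ?_⟩
    · intro t ht t' ht' hag
      refine hF _ (hσ t ht).1 _ (hσ t' ht').1 fun x hx => ?_
      have hxu : x ≠ u := fun h => hd (h ▸ hx.1)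
      rw [(hσ t ht).2 x hxu, hag x hx, ← (hσ t' ht').2 x hxu]
    · refine ih hu.2.2 (by simp only [Set.mem_insert_iff, not_or]; exact ⟨hu.1, hd⟩)
        ⟨?_, ?_⟩ hsat
      · rintro _ ⟨s, hs, rfl⟩
        obtain ⟨t, ht, hst⟩ := hR.1 s hs
        have hFs : F (σ t) = F s := by
          refine hF _ (hσ t ht).1 _ hs fun x hx => ?_
          have hxu : x ≠ u := fun h => hd (h ▸ hx.1)
          rw [(hσ t ht).2 x hxu, ← hst x hxu]
        refine ⟨Function.update t v (F (σ t)), ⟨t, ht, rfl⟩, ?_⟩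
        rw [hFs]
        exact agree_update hst (F s)
      · rintro _ ⟨t, ht, rfl⟩
        exact ⟨Function.update (σ t) v (F (σ t)), ⟨σ t, (hσ t ht).1, rfl⟩,
          agree_update (hσ t ht).2 _⟩

lemma rel_sat_iff {u : Var} {χ : IFForm Var} {d : Set Var} {X Y : Set (Var → M)}
    (hu : u ∉ allVars χ) (hd : u ∉ d) (hR : TRel u X Y) :
    sat I χ d X ↔ sat I χ d Y :=
  ⟨rel_sat hu hd hR, rel_sat hu hd hR.symm⟩

lemma slash_sat {u : Var} {χ : IFForm Var} : ∀ {d : Set Var} {Y : Set (Var → M)},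
    u ∉ allVars χ → u ∉ d →
    (sat I (addSlash χ u) (insert u d) Y ↔ sat I χ d Y) := by
  induction χ with
  | rel r args => exact fun _ _ => Iff.rfl
  | nrel r args => exact fun _ _ => Iff.rfl
  | conj φ ψ ih1 ih2 =>
    intro d Y hu hd
    simp only [allVars, Set.mem_union, not_or] at hu
    exact and_congr (ih1 hu.1 hd) (ih2 hu.2 hd)
  | disj φ ψ ih1 ih2 =>
    intro d Y hu hd
    simp only [allVars, Set.mem_union, not_or] at hu
    exact exists_congr fun A => exists_congr fun B =>
      and_congr_right fun _ => and_congr (ih1 hu.1 hd) (ih2 hu.2 hd)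
  | ex v V φ ih =>
    intro d Y hu hd
    simp only [allVars, Set.mem_insert_iff, Set.mem_union, not_or] at hu
    show (∃ F, Uniform (insert u d) Y (insert u V) F ∧
      sat I (addSlash φ u) (insert v (insert u d)) (supp Y F v)) ↔ _
    refine exists_congr fun F => and_congr (uniform_congr (insert_diff_insert' hd)) ?_
    rw [Set.insert_comm]
    exact ih hu.2.2 (by simp only [Set.mem_insert_iff, not_or]; exact ⟨hu.1, hd⟩)
  | all v V φ ih =>
    intro d Y hu hd
    simp only [allVars, Set.mem_insert_iff, Set.mem_union, not_or] at hu
    show sat I (addSlash φ u) (insert v (insert u d)) (dup Y v) ↔ _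
    rw [Set.insert_comm]
    exact ih hu.2.2 (by simp only [Set.mem_insert_iff, not_or]; exact ⟨hu.1, hd⟩)

end IFForm
namespace IFForm

variable {Var M : Type} [DecidableEq Var] {I : ℕ → List M → Prop}

set_option linter.unusedVariables false

lemma ex_conj {u : Var} {U : Set Var} {ψ χ : IFForm Var} {d : Set Var}
    {X : Set (Var → M)} (hχ : u ∉ allVars χ) (hd : u ∉ d) :
    sat I (IFForm.conj (.ex u U ψ) χ) d X ↔
      sat I (IFForm.ex u U (.conj ψ (addSlash χ u))) d X := by
  simp only [sat]
  constructor
  · rintro ⟨⟨F, hF, h1⟩, h2⟩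
    exact ⟨F, hF, h1, (slash_sat hχ hd).mpr (rel_sat hχ hd (trel_supp u X F) h2)⟩
  · rintro ⟨F, hF, h1, h2⟩
    exact ⟨⟨F, hF, h1⟩,
      rel_sat hχ hd (trel_supp u X F).symm ((slash_sat hχ hd).mp h2)⟩

lemma all_conj {u : Var} {U : Set Var} {ψ χ : IFForm Var} {d : Set Var}
    {X : Set (Var → M)} (hχ : u ∉ allVars χ) (hd : u ∉ d) :
    sat I (IFForm.conj (.all u U ψ) χ) d X ↔
      sat I (IFForm.all u U (.conj ψ (addSlash χ u))) d X := by
  simp only [sat]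
  exact and_congr Iff.rfl
    ((rel_sat_iff hχ hd (trel_dup u X)).trans (slash_sat hχ hd).symm)

lemma ex_disj {u : Var} {U : Set Var} {ψ χ : IFForm Var} {d : Set Var}
    {X : Set (Var → M)} (a : M) (hχ : u ∉ allVars χ) (hd : u ∉ d) :
    sat I (IFForm.disj (.ex u U ψ) χ) d X ↔
      sat I (IFForm.ex u U (.disj ψ (addSlash χ u))) d X := by
  classical
  simp only [sat]
  constructor
  · rintro ⟨Y, Z, rfl, ⟨F, hF, h1⟩, h2⟩
    set F' : (Var → M) → M := fun s =>
      if h : ∃ t ∈ Y, ∀ x ∈ d \ U, s x = t x then F h.choose else a with hF'def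
    have hYF : ∀ t ∈ Y, F' t = F t := by
      intro t ht
      have h : ∃ t' ∈ Y, ∀ x ∈ d \ U, t x = t' x := ⟨t, ht, fun _ _ => rfl⟩
      simp only [hF'def, dif_pos h]
      exact hF _ h.choose_spec.1 _ ht fun x hx => (h.choose_spec.2 x hx).symm
    have hF'unif : Uniform d (Y ∪ Z) U F' := by
      intro s hs s' hs' hag
      by_cases h : ∃ t ∈ Y, ∀ x ∈ d \ U, s x = t x
      · have h' : ∃ t ∈ Y, ∀ x ∈ d \ U, s' x = t x :=
          h.imp fun t ht => ⟨ht.1, fun x hx => (hag x hx).symm.trans (ht.2 x hx)⟩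
        simp only [hF'def, dif_pos h, dif_pos h']
        exact hF _ h.choose_spec.1 _ h'.choose_spec.1 fun x hx =>
          ((h.choose_spec.2 x hx).symm.trans (hag x hx)).trans
            (h'.choose_spec.2 x hx)
      · have h' : ¬ ∃ t ∈ Y, ∀ x ∈ d \ U, s' x = t x := fun h' =>
          h (h'.imp fun t ht => ⟨ht.1, fun x hx => (hag x hx).trans (ht.2 x hx)⟩)
        simp only [hF'def, dif_neg h, dif_neg h']
    refine ⟨F', hF'unif, supp Y F u, supp Z F' u, ?_, h1, ?_⟩
    · rw [supp_union, supp_congr' hYF]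
    · exact (slash_sat hχ hd).mpr (rel_sat hχ hd (trel_supp u Z F') h2)
  · rintro ⟨F, hF, Y', Z', hYZ, h1, h2⟩
    refine ⟨{s ∈ X | Function.update s u (F s) ∈ Y'},
            {s ∈ X | Function.update s u (F s) ∈ Z'}, ?_, ⟨F, ?_, ?_⟩, ?_⟩
    · ext s
      simp only [Set.mem_union, Set.mem_setOf_eq]
      constructor
      · rintro (⟨h, _⟩ | ⟨h, _⟩) <;> exact h
      · intro hs
        have hmem : Function.update s u (F s) ∈ Y' ∪ Z' := by
          rw [hYZ]; exact ⟨s, hs, rfl⟩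
        rcases hmem with h | h
        · exact Or.inl ⟨hs, h⟩
        · exact Or.inr ⟨hs, h⟩
    · exact uniform_mono (Set.sep_subset _ _) hF
    · refine sat_mono ?_ h1
      rintro _ ⟨s, ⟨hs, hsY⟩, rfl⟩; exact hsY
    · refine rel_sat hχ hd (trel_supp u _ F).symm ((slash_sat hχ hd).mp
        (sat_mono ?_ h2))
      rintro _ ⟨s, ⟨hs, hsZ⟩, rfl⟩; exact hsZ

lemma all_disj {u : Var} {U : Set Var} {ψ χ : IFForm Var} {d : Set Var}
    {X : Set (Var → M)} (hχ : u ∉ allVars χ) (hd : u ∉ d) :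
    sat I (IFForm.disj (.all u U ψ) χ) d X ↔
      sat I (IFForm.all u U (.disj ψ (addSlash χ u))) d X := by
  classical
  simp only [sat]
  constructor
  · rintro ⟨Y, Z, rfl, h1, h2⟩
    exact ⟨dup Y u, dup Z u, dup_union.symm, h1,
      (slash_sat hχ hd).mpr (rel_sat hχ hd (trel_dup u Z) h2)⟩
  · rintro ⟨Y', Z', hYZ, h1, h2⟩
    refine ⟨{s ∈ X | ∀ a : M, Function.update s u a ∈ Y'},
            {s ∈ X | ∃ a : M, Function.update s u a ∈ Z'}, ?_, ?_, ?_⟩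
    · ext s
      simp only [Set.mem_union, Set.mem_setOf_eq]
      constructor
      · rintro (⟨h, _⟩ | ⟨h, _⟩) <;> exact h
      · intro hs
        by_cases h : ∃ a : M, Function.update s u a ∈ Z'
        · exact Or.inr ⟨hs, h⟩
        · push_neg at h
          refine Or.inl ⟨hs, fun a => ?_⟩
          have hmem : Function.update s u a ∈ Y' ∪ Z' := by
            rw [hYZ]; exact ⟨s, hs, a, rfl⟩
          exact hmem.resolve_right (h a)
    · refine sat_mono ?_ h1
      rintro _ ⟨s, ⟨hs, hY⟩, b, rfl⟩; exact hY b
    · have hR : TRel u {s ∈ X | ∃ a : M, Function.update s u a ∈ Z'} Z' := by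
        constructor
        · rintro s ⟨hs, b, hb⟩
          exact ⟨Function.update s u b, hb, agree_self_update s b⟩
        · intro t htZ'
          have hmem : t ∈ dup X u := by rw [← hYZ]; exact Or.inr htZ'
          obtain ⟨s, hs, b, rfl⟩ := hmem
          exact ⟨s, ⟨hs, b, htZ'⟩, agree_self_update s b⟩
      exact rel_sat hχ hd hR.symm ((slash_sat hχ hd).mp h2)

end IFForm

open IFForm in
/-- Extraction of quantifiers: for `∘ ∈ {∧,∨}` and `Q ∈ {∃,∀}`, if `u` occurs
neither in `χ` nor in `U`, then `(Qu/U)ψ ∘ χ` and `(Qu/U)(ψ ∘ χ/{u})` are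
satisfied by exactly the same teams `X` with `u ∉ dom(X)`, where `χ/{u}` adds
`u` to all slash sets of `χ`. -/
theorem stmt_9 {Var M : Type} [DecidableEq Var] (I : ℕ → List M → Prop)
    (q c : Bool) (u : Var) (U : Set Var) (ψ χ : IFForm Var)
    (d : Set Var) (X : Set (Var → M))
    (hχ : u ∉ allVars χ) (hU : u ∉ U) (hd : u ∉ d) :
    sat I (conn c (quant q u U ψ) χ) d X ↔
      sat I (quant q u U (conn c ψ (addSlash χ u))) d X := by
  classical
  rcases isEmpty_or_nonempty M with hM | hM
  · have hX : X = ∅ :=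
      Set.eq_empty_iff_forall_notMem.mpr fun s _ => (hM.false (s u)).elim
    subst hX
    exact iff_of_true sat_empty sat_empty
  obtain ⟨a⟩ := hM
  cases q <;> cases c <;>
    simp only [quant, conn, Bool.false_eq_true, if_false, if_true]
  · exact all_disj hχ hd
  · exact all_conj hχ hd
  · exact ex_disj a hχ hd
  · exact ex_conj hχ hd
end

section
/- Elimination of purely existential slash sets: if all variables in V are existentially quantified above (∃v/V) in a regular IF sentence φ, and φ' is obtained from φ by replacing (∃v/V) with ∃v (empty slash set), then φ and φ' are truth-equivalent. -/
open IFForm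

/-- One-hole contexts for IF formulas. -/
inductive Ctx (Var : Type) : Type where
  | hole
  | conjL (C : Ctx Var) (ψ : IFForm Var)
  | conjR (φ : IFForm Var) (C : Ctx Var)
  | disjL (C : Ctx Var) (ψ : IFForm Var)
  | disjR (φ : IFForm Var) (C : Ctx Var)
  | ex (v : Var) (V : Set Var) (C : Ctx Var)
  | all (v : Var) (V : Set Var) (C : Ctx Var)

/-- Filling the hole of a context with a formula. -/
def Ctx.fill {Var : Type} : Ctx Var → IFForm Var → IFForm Var
  | .hole, θ => θ
  | .conjL C ψ, θ => .conj (C.fill θ) ψ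
  | .conjR φ C, θ => .conj φ (C.fill θ)
  | .disjL C ψ, θ => .disj (C.fill θ) ψ
  | .disjR φ C, θ => .disj φ (C.fill θ)
  | .ex v V C, θ => .ex v V (C.fill θ)
  | .all v V C, θ => .all v V (C.fill θ)

/-- The variables existentially quantified above the hole of a context. -/
def Ctx.exPath {Var : Type} : Ctx Var → Set Var
  | .hole => ∅
  | .conjL C _ => C.exPath
  | .conjR _ C => C.exPath
  | .disjL C _ => C.exPath
  | .disjR _ C => C.exPath
  | .ex v _ C => insert v C.exPath
  | .all _ _ C => C.exPath

/-- No quantifier occurs in the scope of another quantifier over the same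
variable (relative to the set `b` of variables already quantified above). -/
def NoRequant {Var : Type} (b : Set Var) : IFForm Var → Prop
  | .rel _ _ => True
  | .nrel _ _ => True
  | .conj φ ψ => NoRequant b φ ∧ NoRequant b ψ
  | .disj φ ψ => NoRequant b φ ∧ NoRequant b ψ
  | .ex v _ φ => v ∉ b ∧ NoRequant (insert v b) φ
  | .all v _ φ => v ∉ b ∧ NoRequant (insert v b) φ

/-- Regular IF formulas. -/
def Regular {Var : Type} (φ : IFForm Var) : Prop :=
  FV φ ∩ BV φ = ∅ ∧ NoRequant ∅ φ

/-- Truth of a sentence in a structure with universe `M` and interpretation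
`I`: every singleton team over the empty domain satisfies it. -/
def IsTrue {M : Type} (I : ℕ → List M → Prop) (φ : IFForm ℕ) : Prop :=
  ∀ s : ℕ → M, sat I φ ∅ ({s} : Set (ℕ → M))

namespace ElimAux

open IFForm

/-- No-requantification data along the path of a context. -/
def PathNR : Set ℕ → Ctx ℕ → Prop
  | _, .hole => True
  | b, .conjL C _ => PathNR b C
  | b, .conjR _ C => PathNR b C
  | b, .disjL C _ => PathNR b C
  | b, .disjR _ C => PathNR b C
  | b, .ex w _ C => w ∉ b ∧ PathNR (insert w b) C
  | b, .all w _ C => w ∉ b ∧ PathNR (insert w b) C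

lemma pathNR_of_noRequant (θ : IFForm ℕ) :
    ∀ (C : Ctx ℕ) (b : Set ℕ), NoRequant b (C.fill θ) → PathNR b C := by
  intro C
  induction C with
  | hole => intro b _; trivial
  | conjL C ψ ih => intro b h; exact ih b h.1
  | conjR φ C ih => intro b h; exact ih b h.2
  | disjL C ψ ih => intro b h; exact ih b h.1
  | disjR φ C ih => intro b h; exact ih b h.2
  | ex w W C ih => intro b h; exact ⟨h.1, ih _ h.2⟩
  | all w W C ih => intro b h; exact ⟨h.1, ih _ h.2⟩

lemma fill_mono {M : Type} (I : ℕ → List M → Prop) {θ θ' : IFForm ℕ}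
    (h : ∀ d X, sat I θ d X → sat I θ' d X) :
    ∀ (C : Ctx ℕ) (d : Set ℕ) (X : Set (ℕ → M)),
      sat I (C.fill θ) d X → sat I (C.fill θ') d X := by
  intro C
  induction C with
  | hole => exact h
  | conjL C ψ ih =>
      intro d X hs
      simp only [Ctx.fill, sat] at hs ⊢
      exact ⟨ih d X hs.1, hs.2⟩
  | conjR φ C ih =>
      intro d X hs
      simp only [Ctx.fill, sat] at hs ⊢
      exact ⟨hs.1, ih d X hs.2⟩
  | disjL C ψ ih =>
      intro d X hs
      simp only [Ctx.fill, sat] at hs ⊢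
      obtain ⟨Y, Z, hYZ, h1, h2⟩ := hs
      exact ⟨Y, Z, hYZ, ih d Y h1, h2⟩
  | disjR φ C ih =>
      intro d X hs
      simp only [Ctx.fill, sat] at hs ⊢
      obtain ⟨Y, Z, hYZ, h1, h2⟩ := hs
      exact ⟨Y, Z, hYZ, h1, ih d Z h2⟩
  | ex w W C ih =>
      intro d X hs
      simp only [Ctx.fill, sat] at hs ⊢
      obtain ⟨F, hF, h1⟩ := hs
      exact ⟨F, hF, ih _ _ h1⟩
  | all w W C ih =>
      intro d X hs
      simp only [Ctx.fill, sat] at hs ⊢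
      exact ih _ _ hs

lemma key {M : Type} (I : ℕ → List M → Prop) (v : ℕ) (V : Set ℕ) (ψ : IFForm ℕ) :
    ∀ (C : Ctx ℕ) (b E d : Set ℕ) (X : Set (ℕ → M)),
      PathNR b C → d ⊆ b → E ⊆ b → V ⊆ E ∪ C.exPath →
      (∀ s ∈ X, ∀ s' ∈ X, (∀ x ∈ d, x ∉ E → s x = s' x) → ∀ x ∈ d, s x = s' x) →
      sat I (C.fill (.ex v ∅ ψ)) d X → sat I (C.fill (.ex v V ψ)) d X := by
  intro C
  induction C with
  | hole =>
      intro b E d X _ _ _ hV hInv hs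
      simp only [Ctx.fill, sat] at hs ⊢
      obtain ⟨F, hF, h1⟩ := hs
      refine ⟨F, ?_, h1⟩
      intro s hsX s' hs'X hag
      refine hF s hsX s' hs'X ?_
      intro x hx
      refine hInv s hsX s' hs'X ?_ x hx.1
      intro y hy hyE
      refine hag y ⟨hy, fun hyV => ?_⟩
      rcases hV hyV with h | h
      · exact hyE h
      · exact absurd h (Set.notMem_empty y)
  | conjL C ψ' ih =>
      intro b E d X hP hdb hEb hV hInv hs
      simp only [Ctx.fill, sat] at hs ⊢
      exact ⟨ih b E d X hP hdb hEb hV hInv hs.1, hs.2⟩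
  | conjR φ C ih =>
      intro b E d X hP hdb hEb hV hInv hs
      simp only [Ctx.fill, sat] at hs ⊢
      exact ⟨hs.1, ih b E d X hP hdb hEb hV hInv hs.2⟩
  | disjL C ψ' ih =>
      intro b E d X hP hdb hEb hV hInv hs
      simp only [Ctx.fill, sat] at hs ⊢
      obtain ⟨Y, Z, hYZ, h1, h2⟩ := hs
      have hYX : Y ⊆ X := hYZ ▸ Set.subset_union_left
      refine ⟨Y, Z, hYZ, ih b E d Y hP hdb hEb hV ?_ h1, h2⟩
      intro s hsY s' hs'Y hag
      exact hInv s (hYX hsY) s' (hYX hs'Y) hag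
  | disjR φ C ih =>
      intro b E d X hP hdb hEb hV hInv hs
      simp only [Ctx.fill, sat] at hs ⊢
      obtain ⟨Y, Z, hYZ, h1, h2⟩ := hs
      have hZX : Z ⊆ X := hYZ ▸ Set.subset_union_right
      refine ⟨Y, Z, hYZ, h1, ih b E d Z hP hdb hEb hV ?_ h2⟩
      intro s hsZ s' hs'Z hag
      exact hInv s (hZX hsZ) s' (hZX hs'Z) hag
  | ex w W C ih =>
      intro b E d X hP hdb hEb hV hInv hs
      obtain ⟨hwb, hP'⟩ := hP
      simp only [Ctx.fill, sat] at hs ⊢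
      obtain ⟨F, hF, h1⟩ := hs
      refine ⟨F, hF, ih (insert w b) (insert w E) (insert w d) (supp X F w) hP'
        (Set.insert_subset_insert hdb) (Set.insert_subset_insert hEb) ?_ ?_ h1⟩
      · intro x hx
        rcases hV hx with h | h
        · exact Or.inl (Set.mem_insert_of_mem _ h)
        · rcases Set.mem_insert_iff.mp h with rfl | h
          · exact Or.inl (Set.mem_insert _ _)
          · exact Or.inr h
      · rintro t ⟨s, hsX, rfl⟩ t' ⟨s', hs'X, rfl⟩ hag
        have hss' : ∀ x ∈ d, x ∉ E → s x = s' x := by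
          intro x hxd hxE
          have hxw : x ≠ w := fun h => hwb (hdb (h ▸ hxd))
          have := hag x (Set.mem_insert_of_mem _ hxd)
            (by simp [Set.mem_insert_iff, hxw, hxE])
          simpa [Function.update, hxw] using this
        have hsd : ∀ x ∈ d, s x = s' x := hInv s hsX s' hs'X hss'
        have hFs : F s = F s' := hF s hsX s' hs'X (fun x hx => hsd x hx.1)
        intro x hx
        rcases Set.mem_insert_iff.mp hx with rfl | hxd
        · simp [Function.update, hFs]
        · by_cases hxw : x = w
          · subst hxw; simp [Function.update, hFs]
          · simp [Function.update, hxw, hsd x hxd]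
  | all w W C ih =>
      intro b E d X hP hdb hEb hV hInv hs
      obtain ⟨hwb, hP'⟩ := hP
      simp only [Ctx.fill, sat] at hs ⊢
      refine ih (insert w b) E (insert w d) (dup X w) hP'
        (Set.insert_subset_insert hdb) (fun x hx => Set.mem_insert_of_mem _ (hEb hx))
        hV ?_ hs
      rintro t ⟨s, hsX, a, rfl⟩ t' ⟨s', hs'X, a', rfl⟩ hag
      have hwE : w ∉ E := fun h => hwb (hEb h)
      have haa : a = a' := by
        have := hag w (Set.mem_insert _ _) hwE
        simpa [Function.update] using this
      have hss' : ∀ x ∈ d, x ∉ E → s x = s' x := by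
        intro x hxd hxE
        have hxw : x ≠ w := fun h => hwb (hdb (h ▸ hxd))
        have := hag x (Set.mem_insert_of_mem _ hxd) hxE
        simpa [Function.update, hxw] using this
      have hsd : ∀ x ∈ d, s x = s' x := hInv s hsX s' hs'X hss'
      intro x hx
      rcases Set.mem_insert_iff.mp hx with rfl | hxd
      · simp [Function.update, haa]
      · by_cases hxw : x = w
        · subst hxw; simp [Function.update, haa]
        · simp [Function.update, hxw, hsd x hxd]

end ElimAux

/-- Elimination of purely existential slash sets: if all variables of `V` are
existentially quantified above the occurrence `(∃v/V)ψ` in the regular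
sentence `C[(∃v/V)ψ]`, then replacing that occurrence with `(∃v/∅)ψ` yields a
truth-equivalent sentence. -/
theorem stmt_11 (C : Ctx ℕ) (v : ℕ) (V : Set ℕ) (ψ : IFForm ℕ)
    (hreg : Regular (C.fill (.ex v V ψ)))
    (hsent : FV (C.fill (.ex v V ψ)) = ∅)
    (hV : V ⊆ C.exPath) :
    ∀ (M : Type) (I : ℕ → List M → Prop),
      IsTrue I (C.fill (.ex v V ψ)) ↔ IsTrue I (C.fill (.ex v ∅ ψ)) := by
  intro M I
  constructor
  · intro h s
    refine ElimAux.fill_mono I ?_ C ∅ {s} (h s)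
    intro d X hs
    obtain ⟨F, hF, h1⟩ := hs
    exact ⟨F, fun a ha a' ha' hag =>
      hF a ha a' ha' (fun x hx => hag x ⟨hx.1, Set.notMem_empty x⟩), h1⟩
  · intro h s
    refine ElimAux.key I v V ψ C ∅ ∅ ∅ {s}
      (ElimAux.pathNR_of_noRequant _ C ∅ hreg.2) (subset_refl _) (subset_refl _)
      (by simpa using hV) ?_ (h s)
    intro a ha a' ha' _ x hx
    exact absurd hx (Set.notMem_empty x)
end

section
/- The IF sentence η := ∀x(∀y(∃u/{x})ε₁ ∨ ∀z(∃v/{x})ε₂), where ε₁ := (A(x) ∧ B(y)) → (u ≠ x ∧ R(u,y)) and ε₂ := (A(x) ∧ B(z)) → (v ≠ x ∧ R(v,z)), is true in a suitable structure M if and only if M encodes a 'yes' instance of SET SPLITTING: there is a partition {U,V} of the set A such that every member of the family B intersects both U and V. -/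
/-- Truth of `η := ∀x(∀y(∃u/{x})ε₁ ∨ ∀z(∃v/{x})ε₂)` where
`ε₁ := (A(x) ∧ B(y)) → (u ≠ x ∧ R(u,y))` and
`ε₂ := (A(x) ∧ B(z)) → (v ≠ x ∧ R(v,z))`:
the team `{∅}[M/x]` splits as `Y ∪ Z`, and each part admits an `{x}`-uniform
choice function (depending only on `y`, resp. `z`) satisfying the matrix. -/
def EtaTrue {M : Type} (A B : M → Prop) (R : M → M → Prop) : Prop :=
  ∃ Y Z : Set M, Y ∪ Z = Set.univ ∧
    (∃ F : M → M, ∀ x ∈ Y, ∀ y : M, (A x ∧ B y) → F y ≠ x ∧ R (F y) y) ∧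
    (∃ G : M → M, ∀ x ∈ Z, ∀ z : M, (A x ∧ B z) → G z ≠ x ∧ R (G z) z)

/-- `M` encodes a 'yes' instance of SET SPLITTING: a partition `{U,V}` of the
set of `A`-elements such that every member of the family meets both parts. -/
def SetSplitYes {M : Type} (A B : M → Prop) (R : M → M → Prop) : Prop :=
  ∃ U V : Set M, U ∪ V = {m | A m} ∧ U ∩ V = ∅ ∧
    ∀ S : M, B S → (∃ a ∈ U, R a S) ∧ (∃ a ∈ V, R a S)

/-- The IF sentence `η` is true in a suitable SET SPLITTING structure (domain
`A ∪ 𝓑`, membership relation `R`, every set of the family containing at least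
two elements) iff the structure encodes a 'yes' instance of SET SPLITTING. -/
theorem stmt_13 {M : Type} (A B : M → Prop) (R : M → M → Prop)
    (hdom : ∀ m : M, A m ∨ B m)
    (hdisj : ∀ m : M, ¬ (A m ∧ B m))
    (hR : ∀ a S : M, R a S → A a ∧ B S)
    (hsuit : ∀ S : M, B S → ∃ a a' : M, a ≠ a' ∧ R a S ∧ R a' S) :
    EtaTrue A B R ↔ SetSplitYes A B R := by
  classical
  constructor
  · rintro ⟨Y, Z, hYZ, ⟨F, hF⟩, ⟨G, hG⟩⟩
    have hmem : ∀ m : M, m ∈ Y ∨ m ∈ Z := fun m => by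
      have : m ∈ Y ∪ Z := hYZ ▸ Set.mem_univ m
      exact this
    refine ⟨{m | A m ∧ m ∈ Y}, {m | A m ∧ m ∉ Y}, ?_, ?_, ?_⟩
    · ext m; simp only [Set.mem_union, Set.mem_setOf_eq]; tauto
    · ext m; simp only [Set.mem_inter_iff, Set.mem_setOf_eq, Set.mem_empty_iff_false,
        iff_false]; tauto
    · intro S hS
      obtain ⟨a, a', hne, ha, ha'⟩ := hsuit S hS
      constructor
      · by_contra h
        push_neg at h
        have key : ∀ b, R b S → b ∈ Z := by
          intro b hb
          have hbA := (hR b S hb).1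
          have hbY : b ∉ Y := fun hbY => h b ⟨hbA, hbY⟩ hb
          rcases hmem b with h1 | h1
          · exact absurd h1 hbY
          · exact h1
        have hGS := hG a (key a ha) S ⟨(hR a S ha).1, hS⟩
        have h2 := hG (G S) (key _ hGS.2) S ⟨(hR _ _ hGS.2).1, hS⟩
        exact h2.1 rfl
      · by_contra h
        push_neg at h
        have key : ∀ b, R b S → b ∈ Y := by
          intro b hb
          have hbA := (hR b S hb).1
          rcases hmem b with h1 | h1
          · exact h1
          · by_contra hbY
            exact h b ⟨hbA, hbY⟩ hb
        have hFS := hF a (key a ha) S ⟨(hR a S ha).1, hS⟩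
        have h2 := hF (F S) (key _ hFS.2) S ⟨(hR _ _ hFS.2).1, hS⟩
        exact h2.1 rfl
  · rintro ⟨U, V, hUV, hdisjUV, hsplit⟩
    refine ⟨{m | m ∉ V}, {m | m ∉ U}, ?_, ?_, ?_⟩
    · ext m
      simp only [Set.mem_union, Set.mem_setOf_eq, Set.mem_univ, iff_true]
      by_contra h
      push_neg at h
      have : m ∈ U ∩ V := ⟨h.2, h.1⟩
      rw [hdisjUV] at this
      exact this
    · refine ⟨fun S => if h : ∃ a, a ∈ V ∧ R a S then h.choose else S, ?_⟩
      intro x hx S hxS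
      obtain ⟨a, haV, haR⟩ := (hsplit S hxS.2).2
      have hex : ∃ a, a ∈ V ∧ R a S := ⟨a, haV, haR⟩
      simp only [dif_pos hex]
      refine ⟨?_, hex.choose_spec.2⟩
      intro heq
      exact hx (heq ▸ hex.choose_spec.1)
    · refine ⟨fun S => if h : ∃ a, a ∈ U ∧ R a S then h.choose else S, ?_⟩
      intro x hx S hxS
      obtain ⟨a, haU, haR⟩ := (hsplit S hxS.2).1
      have hex : ∃ a, a ∈ U ∧ R a S := ⟨a, haU, haR⟩
      simp only [dif_pos hex]
      refine ⟨?_, hex.choose_spec.2⟩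
      intro heq
      exact hx (heq ▸ hex.choose_spec.1)
end

section
/- The IF sentence ∀x∀y∀z(ψ₁(x,y,z) ∨ ((∃u/{x,z})ψ₂(x,y,z,u) ∧ (∃v/{x,y})ψ₃(x,y,z,v))) is true in a structure M if and only if the sentence ∀x∀y(((∃u/{x,z})∀x(ψ₁(x,y,z) ∨ ψ₂(x,y,z,u))) ∧ ((∃v/{x,y})∀x(ψ₁(x,y,z) ∨ ψ₃(x,y,z,v)))) is true in M, for all quantifier-free formulas ψ₁, ψ₂, ψ₃ with the indicated free variables. (Here in the second sentence, z in the first conjunct and the re-quantification of x are handled so that u is chosen as a y-dependent function and v as a z-dependent function.) -/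
/-- Truth of `∀x∀y∀z(ψ₁(x,y,z) ∨ ((∃u/{x,z})ψ₂(x,y,z,u) ∧ (∃v/{x,y})ψ₃(x,y,z,v)))`:
the full team over `x,y,z` splits as `X₁ ∪ X₂`, every assignment of `X₁`
satisfies `ψ₁`, and `X₂` admits an `{x,z}`-uniform choice `F` of `u` (a
function of `y` only) making `ψ₂` hold and an `{x,y}`-uniform choice `G` of
`v` (a function of `z` only) making `ψ₃` hold. -/
def FirstTrue {M : Type} (ψ₁ : M → M → M → Prop)
    (ψ₂ ψ₃ : M → M → M → M → Prop) : Prop :=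
  ∃ X₁ X₂ : Set (M × M × M), X₁ ∪ X₂ = Set.univ ∧
    (∀ x y z : M, (x, y, z) ∈ X₁ → ψ₁ x y z) ∧
    (∃ F : M → M, ∀ x y z : M, (x, y, z) ∈ X₂ → ψ₂ x y z (F y)) ∧
    (∃ G : M → M, ∀ x y z : M, (x, y, z) ∈ X₂ → ψ₃ x y z (G z))

/-- Truth of
`∀x∀y(((∃u/{x,z})∀x(ψ₁(x,y,z) ∨ ψ₂(x,y,z,u))) ∧ ((∃v/{x,y})∀x(ψ₁(x,y,z) ∨ ψ₃(x,y,z,v))))`: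
there are a `z`-independent function `F'` (of `y`) and a `y`-independent
function `G'` (of `z`) such that for all `x, y, z`,
`ψ₁(x,y,z) ∨ ψ₂(x,y,z,F'(y))` and `ψ₁(x,y,z) ∨ ψ₃(x,y,z,G'(z))` hold. -/
def SecondTrue {M : Type} (ψ₁ : M → M → M → Prop)
    (ψ₂ ψ₃ : M → M → M → M → Prop) : Prop :=
  ∃ F' G' : M → M, ∀ x y z : M,
    (ψ₁ x y z ∨ ψ₂ x y z (F' y)) ∧ (ψ₁ x y z ∨ ψ₃ x y z (G' z))

/-- The two sentences above are true in exactly the same structures `M` (with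
at least one element), for all quantifier-free `ψ₁, ψ₂, ψ₃`. -/
theorem stmt_15 {M : Type} [Nonempty M] (ψ₁ : M → M → M → Prop)
    (ψ₂ ψ₃ : M → M → M → M → Prop) :
    FirstTrue ψ₁ ψ₂ ψ₃ ↔ SecondTrue ψ₁ ψ₂ ψ₃ := by
  constructor
  · rintro ⟨X₁, X₂, hU, h₁, ⟨F, hF⟩, ⟨G, hG⟩⟩
    refine ⟨F, G, fun x y z => ?_⟩
    have : (x, y, z) ∈ X₁ ∪ X₂ := hU ▸ Set.mem_univ _
    rcases this with h | h
    · exact ⟨Or.inl (h₁ x y z h), Or.inl (h₁ x y z h)⟩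
    · exact ⟨Or.inr (hF x y z h), Or.inr (hG x y z h)⟩
  · rintro ⟨F', G', h⟩
    refine ⟨{p | ψ₁ p.1 p.2.1 p.2.2},
      {p | ψ₂ p.1 p.2.1 p.2.2 (F' p.2.1) ∧ ψ₃ p.1 p.2.1 p.2.2 (G' p.2.2)}, ?_,
      fun x y z hx => hx, ⟨F', fun x y z hx => hx.1⟩, ⟨G', fun x y z hx => hx.2⟩⟩
    ext ⟨x, y, z⟩
    simp only [Set.mem_union, Set.mem_setOf_eq, Set.mem_univ, iff_true]
    rcases h x y z with ⟨h₂ | h₂, h₃ | h₃⟩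
    · exact Or.inl h₂
    · exact Or.inl h₂
    · exact Or.inl h₃
    · exact Or.inr ⟨h₂, h₃⟩
end

section
/- Let M be a finite structure and φ a regular IF sentence. If M ⊨ ∀x(∀y(∃u/{x})ε₁ ∨ ∀z(∃v/{x})ε₂) with ε₁, ε₂ quantifier-free and both existential choices {x}-uniform, then from any witnessing split Y ∪ Z = {∅}[M/x] with nonempty Y, and any set family structure as in SET SPLITTING, each set B in the family contains an element u_B not of the form s(x) for s ∈ Y. -/
/-- Key step of the SET SPLITTING encoding: let `M` be a finite set-family
structure (domain `A ∪ 𝓑`, membership `R`, each set of the family of size at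
least 2).  Suppose `M ⊨ ∀x(∀y(∃u/{x})ε₁ ∨ ∀z(∃v/{x})ε₂)` with witnessing
split `Y ∪ Z = {∅}[M/x]`, `Y` nonempty, and `{x}`-uniform choice functions `F`
(for `u`, a function of `y`) and `G` (for `v`, a function of `z`) where
`ε₁ := (A(x) ∧ B(y)) → (u ≠ x ∧ R(u,y))` and
`ε₂ := (A(x) ∧ B(z)) → (v ≠ x ∧ R(v,z))`.  Then every set `S` of the family
contains an element `u_S` which is not of the form `s(x)` for `s ∈ Y`. -/
theorem stmt_18 {M : Type} [Finite M] (A B : M → Prop) (R : M → M → Prop)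
    (hdom : ∀ m : M, A m ∨ B m)
    (hdisj : ∀ m : M, ¬ (A m ∧ B m))
    (hR : ∀ a S : M, R a S → A a ∧ B S)
    (hsuit : ∀ S : M, B S → ∃ a a' : M, a ≠ a' ∧ R a S ∧ R a' S)
    (Y Z : Set M) (hsplit : Y ∪ Z = Set.univ) (hY : Y.Nonempty)
    (F : M → M) (hF : ∀ x ∈ Y, ∀ y : M, (A x ∧ B y) → F y ≠ x ∧ R (F y) y)
    (G : M → M) (hG : ∀ x ∈ Z, ∀ z : M, (A x ∧ B z) → G z ≠ x ∧ R (G z) z) :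
    ∀ S : M, B S → ∃ u : M, R u S ∧ ∀ x ∈ Y, u ≠ x := by
  intro S hS
  by_cases h : ∃ x ∈ Y, A x
  · obtain ⟨x₀, hx₀Y, hx₀A⟩ := h
    refine ⟨F S, (hF x₀ hx₀Y S ⟨hx₀A, hS⟩).2, ?_⟩
    intro x hxY
    rcases hdom x with hA | hB
    · exact (hF x hxY S ⟨hA, hS⟩).1
    · intro he
      exact hdisj x ⟨he ▸ (hR (F S) S (hF x₀ hx₀Y S ⟨hx₀A, hS⟩).2).1, hB⟩
  · obtain ⟨a, a', _, haS, _⟩ := hsuit S hS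
    refine ⟨a, haS, ?_⟩
    intro x hxY he
    exact h ⟨x, hxY, he ▸ (hR a S haS).1⟩
end
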